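/- arXiv:2310.20565 — 4 statements merged into one kernel-verified Lean document; each statement's English description precedes it below -/
import Mathlib

section
/- Fix an integer d ≥ 1 and any unitary U ∈ U(d). Then d · Σ_{x ∈ Fin d} ∫ ∫ |⟨U e_x, ψ⟩|² · |⟨U e_x, φ⟩|² · |⟨ψ, φ⟩|² dμ_d(φ) dμ_d(ψ) = (d+3)/(d+1)². Equivalently, for a single measurement in the orthonormal basis given by the columns of U, the average risk (infidelity) of the Bayesian mean estimator over the Haar ensemble of pure states equals exactly 1 − (d+3)/(d+1)², independently of U. -/
/-!
Write `ν` for the Haar state measure, `M x i = ∫ |φ x|² |φ i|² dν` and `d` for the dimension.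
Since `ν` is invariant under every unitary, flipping the sign of one coordinate kills all cross
terms of `|⟨ψ, φ⟩|²`, so `∫ |φ x|² |⟨ψ, φ⟩|² dν = ∑ i, |ψ i|² M x i`, and conjugating by `U`
turns the Born weights into `|ψ x|²`; each summand of the theorem is therefore `∑ i, (M x i)²`.
Permutation invariance makes `M x i` depend only on whether `x = i`. A unitary mixing two
coordinates `p ≠ q` gives `∫ |φ p + c φ q|⁴ dν = 4 M p p` for `|c| = 1`, and averaging over the
fourth roots of unity `c` yields `M p p = 2 M p q`. On the unit sphere `∑ x i, M x i = 1`, hence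
`M x i = (1 + δ x i) / (d (d + 1))`, and `d ∑ x i, (M x i)² = (d + 3) / (d + 1)²`.
-/

open MeasureTheory Matrix

/-- The Hermitian inner product `⟨u, v⟩ = ∑ i, conj (u i) * v i` on `ℂ^d`. -/
noncomputable def cInner {d : ℕ} (u v : Fin d → ℂ) : ℂ :=
  ∑ i, (starRingEnd ℂ) (u i) * v i

/-- `μ` is the Haar probability measure on the compact group `U(d)` of `d × d`
complex unitary matrices, viewed as a Borel measure on the space of all `d × d`
complex matrices: it is a probability measure, it is supported on the unitary
matrices, and it is invariant under left translation by every unitary matrix.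
(On the compact metrizable group `U(d)` these properties characterize the Haar
probability measure uniquely.) -/
def IsHaarUnitary {d : ℕ} (μ : Measure (Fin d → Fin d → ℂ)) : Prop :=
  IsProbabilityMeasure μ ∧
    (∀ᵐ U ∂μ, Matrix.of U ∈ Matrix.unitaryGroup (Fin d) ℂ) ∧
    ∀ V ∈ Matrix.unitaryGroup (Fin d) ℂ,
      μ.map (fun U => Matrix.of.symm (V * Matrix.of U)) = μ

/-- The Haar pure-state measure `μ_d` on `ℂ^d`: the pushforward of the Haar
probability measure on `U(d)` under the map sending a unitary to its first
column. -/
noncomputable def pureStateMeasure {d : ℕ} (hd : 0 < d)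
    (μ : Measure (Fin d → Fin d → ℂ)) : Measure (Fin d → ℂ) :=
  μ.map fun U i => U i ⟨0, hd⟩

/-- The Born-rule probability `|⟨U e_x, ψ⟩|²` of outcome `x` when measuring the
pure state `ψ` in the orthonormal basis given by the columns of `U`. -/
noncomputable def bornP {d : ℕ} (U : Fin d → Fin d → ℂ) (x : Fin d)
    (ψ : Fin d → ℂ) : ℝ :=
  ‖∑ i, (starRingEnd ℂ) (U i x) * ψ i‖ ^ 2


namespace Matrix

variable {n α : Type*} [Fintype n] [DecidableEq n] [CommRing α] [StarRing α]

theorem diagonal_mem_unitaryGroup {v : n → α} (hv : ∀ i, star (v i) * v i = 1) :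
    diagonal v ∈ unitaryGroup n α := by
  rw [mem_unitaryGroup_iff', star_eq_conjTranspose, diagonal_conjTranspose, diagonal_mul_diagonal,
    diagonal_eq_one]
  exact funext hv

theorem permMatrix_mem_unitaryGroup (σ : Equiv.Perm n) :
    σ.permMatrix α ∈ unitaryGroup n α := by
  rw [mem_unitaryGroup_iff', star_eq_conjTranspose, conjTranspose_permMatrix, ← permMatrix_mul,
    mul_inv_cancel, permMatrix_one]

theorem one_add_smul_vecMulVec_mem_unitaryGroup {v : n → α} {s : α}
    (h : star s + s + star s * s * (star v ⬝ᵥ v) = 0) :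
    1 + s • vecMulVec v (star v) ∈ unitaryGroup n α := by
  rw [mem_unitaryGroup_iff', star_eq_conjTranspose, conjTranspose_add, conjTranspose_one,
    conjTranspose_smul, conjTranspose_vecMulVec, star_star]
  have hsq : vecMulVec v (star v) * vecMulVec v (star v)
      = (star v ⬝ᵥ v) • vecMulVec v (star v) := by
    rw [vecMulVec_mul_vecMulVec, vecMulVec_smul]
  calc (1 + star s • vecMulVec v (star v)) * (1 + s • vecMulVec v (star v))
      = 1 + (star s + s + star s * s * (star v ⬝ᵥ v)) • vecMulVec v (star v) := by
        simp only [add_mul, mul_add, one_mul, mul_one, smul_mul_smul_comm, hsq, smul_smul, add_smul]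
        abel
    _ = 1 := by rw [h, zero_smul, add_zero]

theorem star_mulVec_dotProduct_mulVec {V : Matrix n n ℂ} (hV : V ∈ unitaryGroup n ℂ) (ψ φ : n → ℂ) :
    star (V *ᵥ ψ) ⬝ᵥ (V *ᵥ φ) = star ψ ⬝ᵥ φ := by
  rw [star_mulVec, ← dotProduct_mulVec, mulVec_mulVec, ← star_eq_conjTranspose,
    Unitary.star_mul_self_of_mem hV, one_mulVec]

end Matrix

theorem Complex.sq_norm_sum_eq_sum_sum_re {ι : Type*} (s : Finset ι) (w : ι → ℂ) :
    ‖∑ i ∈ s, w i‖ ^ 2 = ∑ i ∈ s, ∑ j ∈ s, (w i * starRingEnd ℂ (w j)).re := by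
  rw [← Complex.ofReal_re (_ ^ 2), Complex.ofReal_pow, ← Complex.mul_conj', map_sum,
    Finset.sum_mul_sum, Complex.re_sum]
  simp_rw [Complex.re_sum]

theorem Complex.sum_range_four_norm_add_I_pow_mul_pow_four (x y : ℂ) :
    ∑ k ∈ Finset.range 4, ‖x + I ^ k * y‖ ^ 4
      = 4 * (‖x‖ ^ 2 * ‖x‖ ^ 2 + ‖y‖ ^ 2 * ‖y‖ ^ 2) + 16 * (‖x‖ ^ 2 * ‖y‖ ^ 2) := by
  simp only [Finset.sum_range_succ, Finset.sum_range_zero, show (4 : ℕ) = 2 * 2 from rfl, pow_mul,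
    Complex.sq_norm, Complex.normSq_apply]
  simp only [pow_zero, pow_succ, one_mul, I_mul_I, add_re, add_im, mul_re, mul_im, I_re, I_im,
    neg_re, neg_im, one_re, one_im]
  ring

noncomputable def quarticMoment {n : Type*} (ν : Measure (n → ℂ)) (i j : n) : ℝ :=
  ∫ φ, ‖φ i‖ ^ 2 * ‖φ j‖ ^ 2 ∂ν

structure IsUnitarilyInvariantOnSphere {n : Type*} [Fintype n] [DecidableEq n]
    (ν : Measure (n → ℂ)) : Prop where
  isProbabilityMeasure : IsProbabilityMeasure ν
  ae_sum_norm_sq : ∀ᵐ φ ∂ν, ∑ i, ‖φ i‖ ^ 2 = 1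
  map_mulVec : ∀ V ∈ unitaryGroup n ℂ, ν.map (V *ᵥ ·) = ν

namespace IsUnitarilyInvariantOnSphere

variable {n : Type*} [Fintype n] [DecidableEq n] {ν : Measure (n → ℂ)}

theorem integral_comp_mulVec (hν : IsUnitarilyInvariantOnSphere ν) {E : Type*}
    [NormedAddCommGroup E] [NormedSpace ℝ E] {V : Matrix n n ℂ} (hV : V ∈ unitaryGroup n ℂ)
    (f : (n → ℂ) → E) :
    ∫ φ, f (V *ᵥ φ) ∂ν = ∫ φ, f φ ∂ν := by
  let e : (n → ℂ) ≃ᵐ (n → ℂ) :=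
    (UnitaryGroup.toLinearEquiv ⟨V, hV⟩).toContinuousLinearEquiv.toHomeomorph.toMeasurableEquiv
  have := integral_map_equiv (μ := ν) e f
  rwa [show ⇑e = (V *ᵥ ·) from rfl, hν.map_mulVec V hV, eq_comm] at this

theorem ae_norm_le_one (hν : IsUnitarilyInvariantOnSphere ν) : ∀ᵐ φ ∂ν, ‖φ‖ ≤ 1 := by
  filter_upwards [hν.ae_sum_norm_sq] with φ hφ
  refine (pi_norm_le_iff_of_nonneg zero_le_one).mpr fun i => ?_
  have : ‖φ i‖ ^ 2 ≤ 1 :=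
    hφ.symm ▸ Finset.single_le_sum (fun j _ => sq_nonneg ‖φ j‖) (Finset.mem_univ i)
  nlinarith [norm_nonneg (φ i)]

theorem integrable_of_continuous (hν : IsUnitarilyInvariantOnSphere ν) {E : Type*}
    [NormedAddCommGroup E] {f : (n → ℂ) → E} (hf : Continuous f) : Integrable f ν := by
  have := hν.isProbabilityMeasure
  obtain ⟨C, hC⟩ := (isCompact_closedBall (0 : n → ℂ) 1).exists_bound_of_continuousOn
    hf.continuousOn
  refine Integrable.of_bound hf.aestronglyMeasurable C ?_
  filter_upwards [hν.ae_norm_le_one] with φ hφ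
  exact hC φ (mem_closedBall_zero_iff.mpr hφ)

theorem integrable_norm_sq_mul_norm_sq (hν : IsUnitarilyInvariantOnSphere ν) (i j : n) :
    Integrable (fun φ : n → ℂ => ‖φ i‖ ^ 2 * ‖φ j‖ ^ 2) ν :=
  hν.integrable_of_continuous (by fun_prop)

theorem integral_eq_zero_of_update_neg (hν : IsUnitarilyInvariantOnSphere ν) (i : n)
    {f : (n → ℂ) → ℝ} (hf : ∀ φ, f (Function.update φ i (-φ i)) = -f φ) :
    ∫ φ, f φ ∂ν = 0 := by
  have hV : diagonal (Function.update 1 i (-1)) ∈ unitaryGroup n ℂ := by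
    refine diagonal_mem_unitaryGroup fun k => ?_
    rcases eq_or_ne k i with rfl | hk <;> simp [*]
  have hflip (φ : n → ℂ) :
      diagonal (Function.update 1 i (-1)) *ᵥ φ = Function.update φ i (-φ i) := by
    ext k
    rcases eq_or_ne k i with rfl | hk <;> simp [mulVec_diagonal, *]
  have := hν.integral_comp_mulVec hV f
  simp only [hflip, hf, integral_neg] at this
  linarith

theorem integral_integral_comp_mulVec (hν : IsUnitarilyInvariantOnSphere ν) {V : Matrix n n ℂ}
    (hV : V ∈ unitaryGroup n ℂ) (g : (n → ℂ) → (n → ℂ) → ℝ) :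
    ∫ ψ, ∫ φ, g (V *ᵥ ψ) (V *ᵥ φ) ∂ν ∂ν = ∫ ψ, ∫ φ, g ψ φ ∂ν ∂ν := by
  simp_rw [hν.integral_comp_mulVec hV (g (V *ᵥ _))]
  exact hν.integral_comp_mulVec hV fun ψ => ∫ φ, g ψ φ ∂ν

theorem quarticMoment_apply_perm (hν : IsUnitarilyInvariantOnSphere ν) (σ : Equiv.Perm n)
    (i j : n) :
    quarticMoment ν (σ i) (σ j) = quarticMoment ν i j := by
  simpa [quarticMoment, permMatrix_mulVec] using
    hν.integral_comp_mulVec (permMatrix_mem_unitaryGroup σ) fun φ => ‖φ i‖ ^ 2 * ‖φ j‖ ^ 2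

theorem sum_sum_quarticMoment (hν : IsUnitarilyInvariantOnSphere ν) :
    ∑ i, ∑ j, quarticMoment ν i j = 1 := by
  have := hν.isProbabilityMeasure
  calc ∑ i, ∑ j, quarticMoment ν i j = ∫ φ, ∑ i, ∑ j, ‖φ i‖ ^ 2 * ‖φ j‖ ^ 2 ∂ν := by
        rw [integral_finsetSum _ fun i _ =>
          integrable_finsetSum _ fun j _ => hν.integrable_norm_sq_mul_norm_sq i j]
        simp_rw [integral_finsetSum _ fun j _ => hν.integrable_norm_sq_mul_norm_sq _ j]
        rfl
    _ = ∫ _, 1 ∂ν := by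
        refine integral_congr_ae ?_
        filter_upwards [hν.ae_sum_norm_sq] with φ hφ
        rw [← Finset.sum_mul_sum, hφ, one_mul]
    _ = 1 := by simp

theorem integral_norm_add_mul_pow_four (hν : IsUnitarilyInvariantOnSphere ν) {p q : n}
    (hpq : p ≠ q) {c : ℂ} (hc : ‖c‖ = 1) :
    ∫ φ, ‖φ p + c * φ q‖ ^ 4 ∂ν = 4 * quarticMoment ν p p := by
  set s : ℂ := (Complex.I - 1) / 2
  set v : n → ℂ := Pi.single p 1 + Pi.single q (Complex.I * star c)
  have hvp : v p = 1 := by simp [v, hpq.symm]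
  have hvq : v q = Complex.I * star c := by simp [v, hpq]
  have hdot (φ : n → ℂ) : star v ⬝ᵥ φ = φ p - Complex.I * c * φ q := by
    simp [v, add_dotProduct, sub_eq_add_neg]
  have hU : 1 + s • vecMulVec v (star v) ∈ unitaryGroup n ℂ := by
    have hcc : c * star c = 1 := by rw [Complex.star_def, Complex.mul_conj', hc]; norm_num
    have hv : star v ⬝ᵥ v = 2 := by
      rw [hdot, hvp, hvq]
      linear_combination (-Complex.I ^ 2) * hcc - Complex.I_sq
    refine one_add_smul_vecMulVec_mem_unitaryGroup ?_
    norm_num [hv, s, Complex.ext_iff]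
  have hUp (φ : n → ℂ) : ((1 + s • vecMulVec v (star v)) *ᵥ φ) p = (1 + s) * (φ p + c * φ q) := by
    rw [add_mulVec, one_mulVec, smul_mulVec, vecMulVec_mulVec]
    simp only [Pi.add_apply, Pi.smul_apply, MulOpposite.smul_eq_mul_unop, MulOpposite.unop_op,
      smul_eq_mul, hdot, hvp]
    linear_combination (-(c * φ q) / 2) * Complex.I_sq
  have hs : ‖1 + s‖ ^ 4 = 1 / 4 := by
    rw [show 4 = 2 * 2 from rfl, pow_mul, Complex.sq_norm, Complex.normSq_apply]
    norm_num [s]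
  have hinv := hν.integral_comp_mulVec hU fun φ => ‖φ p‖ ^ 4
  simp only [hUp, norm_mul, mul_pow, hs] at hinv
  rw [integral_const_mul] at hinv
  simp_rw [quarticMoment, ← pow_add]
  linarith

theorem quarticMoment_self_eq_two_mul (hν : IsUnitarilyInvariantOnSphere ν) {p q : n}
    (hpq : p ≠ q) : quarticMoment ν p p = 2 * quarticMoment ν p q := by
  have hqq : quarticMoment ν q q = quarticMoment ν p p := by
    simpa using hν.quarticMoment_apply_perm (Equiv.swap p q) p p
  have key := integral_congr_ae (μ := ν) (Filter.Eventually.of_forall fun φ : n → ℂ =>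
    Complex.sum_range_four_norm_add_I_pow_mul_pow_four (φ p) (φ q))
  rw [integral_finsetSum _ fun k _ => hν.integrable_of_continuous (by fun_prop),
    Finset.sum_congr rfl fun k _ => hν.integral_norm_add_mul_pow_four hpq (by simp),
    integral_add (hν.integrable_of_continuous (by fun_prop))
      ((hν.integrable_norm_sq_mul_norm_sq p q).const_mul 16),
    integral_const_mul, integral_const_mul, integral_add (hν.integrable_norm_sq_mul_norm_sq p p)
      (hν.integrable_norm_sq_mul_norm_sq q q)] at key
  simp only [Finset.sum_const, Finset.card_range, nsmul_eq_mul, Nat.cast_ofNat] at key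
  change _ = 4 * (quarticMoment ν p p + quarticMoment ν q q) + 16 * quarticMoment ν p q at key
  linarith

theorem quarticMoment_eq (hν : IsUnitarilyInvariantOnSphere ν) (i j : n) :
    quarticMoment ν i j = (if i = j then 2 else 1) / (Fintype.card n * (Fintype.card n + 1)) := by
  set b := quarticMoment ν i i
  have hdiag : ∀ k, quarticMoment ν k k = b := fun k => by
    simpa using hν.quarticMoment_apply_perm (Equiv.swap i k) i i
  have hall : ∀ k l, quarticMoment ν k l = (if k = l then 2 else 1) * (b / 2) := by
    intro k l
    split_ifs with hkl
    · rw [hkl, hdiag]; ring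
    · linarith [hν.quarticMoment_self_eq_two_mul hkl, hdiag k]
  have hrow : ∀ k : n, ∑ l, (if k = l then (2 : ℝ) else 1) = Fintype.card n + 1 := fun k => by
    simp_rw [show ∀ l, (if k = l then (2 : ℝ) else 1) = 1 + if k = l then 1 else 0 from
      fun l => by split_ifs <;> norm_num]
    simp [Finset.sum_add_distrib]
  have hsum := hν.sum_sum_quarticMoment
  simp_rw [hall, ← Finset.sum_mul, hrow] at hsum
  have : Nonempty n := ⟨i⟩
  rw [hall, eq_div_iff (by positivity)]
  simp only [Finset.sum_const, Finset.card_univ, nsmul_eq_mul] at hsum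
  linear_combination (if i = j then (2 : ℝ) else 1) * hsum

theorem integral_norm_sq_mul_norm_sq_dotProduct (hν : IsUnitarilyInvariantOnSphere ν) (x : n)
    (ψ : n → ℂ) :
    ∫ φ, ‖φ x‖ ^ 2 * ‖star ψ ⬝ᵥ φ‖ ^ 2 ∂ν = ∑ i, ‖ψ i‖ ^ 2 * quarticMoment ν x i := by
  set w : (n → ℂ) → n → ℂ := fun φ i => star (ψ i) * φ i
  have hexp : ∀ φ, ‖φ x‖ ^ 2 * ‖star ψ ⬝ᵥ φ‖ ^ 2
      = ∑ i, ∑ j, ‖φ x‖ ^ 2 * (w φ i * starRingEnd ℂ (w φ j)).re := fun φ => by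
    rw [dotProduct, Complex.sq_norm_sum_eq_sum_sum_re, Finset.mul_sum]
    simp_rw [Finset.mul_sum]
    rfl
  have hint : ∀ i j, Integrable (fun φ => ‖φ x‖ ^ 2 * (w φ i * starRingEnd ℂ (w φ j)).re) ν :=
    fun i j => hν.integrable_of_continuous (by fun_prop)
  have hcross : ∀ i j, i ≠ j → ∫ φ, ‖φ x‖ ^ 2 * (w φ i * starRingEnd ℂ (w φ j)).re ∂ν = 0 :=
    fun i j hij => hν.integral_eq_zero_of_update_neg i fun φ => by
      have hx : ‖Function.update φ i (-φ i) x‖ = ‖φ x‖ := by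
        rcases eq_or_ne x i with rfl | hx <;> simp [*]
      simp only [w, hx, Function.update_self, Function.update_of_ne hij.symm, mul_neg, neg_mul,
        Complex.neg_re]
  have hdiag : ∀ i, ∫ φ, ‖φ x‖ ^ 2 * (w φ i * starRingEnd ℂ (w φ i)).re ∂ν
      = ‖ψ i‖ ^ 2 * quarticMoment ν x i := fun i => by
    rw [quarticMoment, ← integral_const_mul]
    congr 1; ext φ
    rw [Complex.mul_conj', ← Complex.ofReal_pow, Complex.ofReal_re]
    simp only [w, norm_mul, norm_star]
    ring
  calc ∫ φ, ‖φ x‖ ^ 2 * ‖star ψ ⬝ᵥ φ‖ ^ 2 ∂ν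
      = ∑ i, ∑ j, ∫ φ, ‖φ x‖ ^ 2 * (w φ i * starRingEnd ℂ (w φ j)).re ∂ν := by
        simp_rw [hexp, integral_finsetSum _ fun i _ => integrable_finsetSum _ fun j _ => hint i j,
          integral_finsetSum _ fun j _ => hint _ j]
    _ = ∑ i, ‖ψ i‖ ^ 2 * quarticMoment ν x i := by
        refine Finset.sum_congr rfl fun i _ => ?_
        rw [Finset.sum_eq_single i (fun j _ hji => hcross i j hji.symm) (by simp), hdiag]

theorem integral_integral_norm_sq_mul_norm_sq_mul_norm_sq_dotProduct
    (hν : IsUnitarilyInvariantOnSphere ν) (x : n) :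
    ∫ ψ, ∫ φ, ‖ψ x‖ ^ 2 * ‖φ x‖ ^ 2 * ‖star ψ ⬝ᵥ φ‖ ^ 2 ∂ν ∂ν = ∑ i, quarticMoment ν x i ^ 2 := by
  simp_rw [mul_assoc, integral_const_mul, hν.integral_norm_sq_mul_norm_sq_dotProduct,
    Finset.mul_sum]
  rw [integral_finsetSum _ fun i _ => hν.integrable_of_continuous (by fun_prop)]
  refine Finset.sum_congr rfl fun i _ => ?_
  simp_rw [← mul_assoc, integral_mul_const, sq (quarticMoment ν x i)]
  rfl

theorem card_mul_sum_sum_quarticMoment_sq [Nonempty n] (hν : IsUnitarilyInvariantOnSphere ν) :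
    (Fintype.card n : ℝ) * ∑ x, ∑ i, quarticMoment ν x i ^ 2
      = (Fintype.card n + 3) / (Fintype.card n + 1) ^ 2 := by
  have hrow : ∀ x : n, ∑ i, (if x = i then (2 : ℝ) else 1) ^ 2 = Fintype.card n + 3 := fun x => by
    simp_rw [show ∀ i, (if x = i then (2 : ℝ) else 1) ^ 2 = 1 + if x = i then 3 else 0 from
      fun i => by split_ifs <;> norm_num]
    simp [Finset.sum_add_distrib]
  have hcard : (Fintype.card n : ℝ) ≠ 0 := by positivity
  simp_rw [hν.quarticMoment_eq, div_pow, ← Finset.sum_div, hrow, Finset.sum_const, Finset.card_univ,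
    nsmul_eq_mul]
  field_simp

end IsUnitarilyInvariantOnSphere

theorem isUnitarilyInvariantOnSphere_pureStateMeasure {d : ℕ} (hd : 0 < d)
    {μ : Measure (Fin d → Fin d → ℂ)} (hμ : IsHaarUnitary μ) :
    IsUnitarilyInvariantOnSphere (pureStateMeasure hd μ) := by
  obtain ⟨hprob, hunit, hinv⟩ := hμ
  have hcol : Measurable fun (U : Fin d → Fin d → ℂ) i => U i ⟨0, hd⟩ := by fun_prop
  refine ⟨Measure.isProbabilityMeasure_map hcol.aemeasurable, ?_, fun V hV => ?_⟩
  · rw [pureStateMeasure, ae_map_iff hcol.aemeasurable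
      (isClosed_eq (by fun_prop) continuous_const).measurableSet]
    filter_upwards [hunit] with U hU
    have := congrFun₂ (mem_unitaryGroup_iff'.mp hU) ⟨0, hd⟩ ⟨0, hd⟩
    simp only [mul_apply, star_apply, of_apply, RCLike.star_def, Complex.conj_mul', one_apply_eq]
      at this
    exact_mod_cast this
  · have hmul : Measurable fun U : Fin d → Fin d → ℂ => Matrix.of.symm (V * Matrix.of U) :=
      show Measurable fun U : Fin d → Fin d → ℂ => fun i j => ∑ k, V i k * U k j by fun_prop
    rw [pureStateMeasure, Measure.map_map (by fun_prop) hcol]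
    conv_rhs => rw [← hinv V hV, Measure.map_map hcol hmul]
    rfl

theorem bornP_eq_norm_sq_star_mulVec {d : ℕ} (U : Fin d → Fin d → ℂ) (x : Fin d) (ψ : Fin d → ℂ) :
    bornP U x ψ = ‖(star (Matrix.of U) *ᵥ ψ) x‖ ^ 2 := rfl

theorem cInner_eq_star_dotProduct {d : ℕ} (ψ φ : Fin d → ℂ) : cInner ψ φ = star ψ ⬝ᵥ φ := rfl

/-- For a single measurement in the orthonormal basis given by the columns of a
unitary `U`, the Haar-averaged posterior-mean fidelity of the Bayesian mean
estimator over the Haar ensemble of pure states equals `(d + 3) / (d + 1)²`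
independently of `U`:
`d · ∑ₓ ∫∫ |⟨U eₓ, ψ⟩|² |⟨U eₓ, φ⟩|² |⟨ψ, φ⟩|² dμ_d(φ) dμ_d(ψ) = (d+3)/(d+1)²`,
i.e. the average risk (infidelity) equals exactly `1 − (d+3)/(d+1)²`. -/
theorem average_fidelity_single_shot_haar_basis {d : ℕ} (hd : 0 < d)
    (μU : Measure (Fin d → Fin d → ℂ)) (hμU : IsHaarUnitary μU)
    (U : Fin d → Fin d → ℂ) (hU : Matrix.of U ∈ Matrix.unitaryGroup (Fin d) ℂ) :
    (d : ℝ) *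
        ∑ x : Fin d,
          ∫ ψ, ∫ φ, bornP U x ψ * bornP U x φ * ‖cInner ψ φ‖ ^ 2
              ∂(pureStateMeasure hd μU) ∂(pureStateMeasure hd μU)
      = (d + 3) / (d + 1) ^ 2 := by
  set ν := pureStateMeasure hd μU
  have hν : IsUnitarilyInvariantOnSphere ν := isUnitarilyInvariantOnSphere_pureStateMeasure hd hμU
  have hV : star (Matrix.of U) ∈ unitaryGroup (Fin d) ℂ := Unitary.star_mem hU
  have hx (x : Fin d) : ∫ ψ, ∫ φ, bornP U x ψ * bornP U x φ * ‖cInner ψ φ‖ ^ 2 ∂ν ∂ν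
      = ∑ i, quarticMoment ν x i ^ 2 := by
    let g : (Fin d → ℂ) → (Fin d → ℂ) → ℝ := fun ψ φ =>
      ‖ψ x‖ ^ 2 * ‖φ x‖ ^ 2 * ‖star ψ ⬝ᵥ φ‖ ^ 2
    have hg (ψ φ : Fin d → ℂ) : bornP U x ψ * bornP U x φ * ‖cInner ψ φ‖ ^ 2
        = g (star (Matrix.of U) *ᵥ ψ) (star (Matrix.of U) *ᵥ φ) := by
      rw [bornP_eq_norm_sq_star_mulVec, bornP_eq_norm_sq_star_mulVec, cInner_eq_star_dotProduct,
        ← star_mulVec_dotProduct_mulVec hV]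
    simp_rw [hg]
    rw [hν.integral_integral_comp_mulVec hV g,
      hν.integral_integral_norm_sq_mul_norm_sq_mul_norm_sq_dotProduct]
  have : Nonempty (Fin d) := ⟨⟨0, hd⟩⟩
  simpa [hx] using hν.card_mul_sum_sum_quarticMoment_sq
end

section
/- For an ensemble (p, ρ) on a finite alphabet Γ with ρ_out positive definite, the Bayesian mean estimator under the pretty good measurement has the closed form: for every outcome x ∈ Γ, ρ̂_B(x) := Σ_{a ∈ Γ} (p_a Tr(E_x ρ_a) / Σ_{b} p_b Tr(E_x ρ_b)) · ρ_a = Σ_{a ∈ Γ} Tr(E_a ρ_x) · ρ_a. -/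
/-! With `S = ρ_out^{1/2}`, cyclicity of the trace gives the detailed balance
`p_a Tr(E_x ρ_a) = p_x Tr(E_a ρ_x)`, since both equal `p_a p_x Tr(S⁻¹ ρ_x S⁻¹ ρ_a)`.
Summing over `a` and using the completeness `∑ₐ Eₐ = S⁻¹ ρ_out S⁻¹ = 1` of the
measurement, the Bayes normaliser is `p_x Tr ρ_x = p_x`, which cancels. -/

open Matrix
open scoped ComplexOrder

/-- The positive semidefinite square root of a positive semidefinite matrix
(removed from Mathlib; restored here with its former definition). -/
noncomputable def Matrix.PosSemidef.sqrt {n : Type*} {𝕜 : Type*} [Fintype n] [RCLike 𝕜]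
    [DecidableEq n] {A : Matrix n n 𝕜} (hA : A.PosSemidef) : Matrix n n 𝕜 :=
  (hA.1.eigenvectorUnitary : Matrix n n 𝕜) *
    diagonal ((RCLike.ofReal : ℝ → 𝕜) ∘ Real.sqrt ∘ hA.1.eigenvalues) *
  (star hA.1.eigenvectorUnitary : Matrix n n 𝕜)

/-- The `x`-th element `E_x = ρ_out^{-1/2} (p_x ρ_x) ρ_out^{-1/2}` of the pretty
good measurement associated with the ensemble `(p, ρ)`, where
`ρ_out = ∑ₐ pₐ ρₐ` and `ρ_out^{-1/2}` is the inverse of the positive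
semidefinite square root of `ρ_out`. -/
noncomputable def pgm {n : ℕ} {Γ : Type*} [Fintype Γ]
    (p : Γ → ℝ) (ρ : Γ → Matrix (Fin n) (Fin n) ℂ)
    (hout : (∑ a, (p a : ℂ) • ρ a).PosSemidef) (x : Γ) :
    Matrix (Fin n) (Fin n) ℂ :=
  hout.sqrt⁻¹ * ((p x : ℂ) • ρ x) * hout.sqrt⁻¹

theorem Matrix.trace_mul_mul_mul_comm {n R : Type*} [Fintype n] [CommSemiring R]
    (T A B : Matrix n n R) : (T * A * T * B).trace = (T * B * T * A).trace := by
  rw [Matrix.mul_assoc, trace_mul_comm, ← Matrix.mul_assoc]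

section Sqrt

variable {n 𝕜 : Type*} [Fintype n] [DecidableEq n] [RCLike 𝕜]

theorem Matrix.PosSemidef.sqrt_mul_self {A : Matrix n n 𝕜} (hA : A.PosSemidef) :
    hA.sqrt * hA.sqrt = A := by
  conv_rhs => rw [hA.1.spectral_theorem, Unitary.conjStarAlgAut_apply]
  rw [PosSemidef.sqrt]
  simp only [Matrix.mul_assoc]
  rw [← Matrix.mul_assoc (star (hA.1.eigenvectorUnitary : Matrix n n 𝕜)),
    Unitary.star_mul_self_of_mem hA.1.eigenvectorUnitary.2, Matrix.one_mul,
    ← Matrix.mul_assoc (diagonal _), diagonal_mul_diagonal]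
  congr 3
  funext i
  simp only [Function.comp_apply, ← RCLike.ofReal_mul]
  rw [Real.mul_self_sqrt (hA.eigenvalues_nonneg i)]

theorem Matrix.PosDef.isUnit_det_sqrt {A : Matrix n n 𝕜} (hA : A.PosDef) :
    IsUnit hA.posSemidef.sqrt.det := by
  have hdet : IsUnit A.det := (isUnit_iff_isUnit_det A).mp hA.isUnit
  rw [← hA.posSemidef.sqrt_mul_self, det_mul] at hdet
  exact isUnit_of_mul_isUnit_left hdet

end Sqrt

section PGM

variable {n : ℕ} {Γ : Type*} [Fintype Γ] (p : Γ → ℝ) (ρ : Γ → Matrix (Fin n) (Fin n) ℂ)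

theorem mul_trace_pgm_mul_comm (hout : (∑ a, (p a : ℂ) • ρ a).PosSemidef) (x a : Γ) :
    (p a : ℂ) * (pgm p ρ hout x * ρ a).trace = p x * (pgm p ρ hout a * ρ x).trace := by
  simp only [pgm, Matrix.mul_smul, Matrix.smul_mul, trace_smul, smul_eq_mul]
  rw [trace_mul_mul_mul_comm]
  ring

theorem sum_pgm (hpd : (∑ a, (p a : ℂ) • ρ a).PosDef) :
    ∑ a, pgm p ρ hpd.posSemidef a = 1 := by
  set S := hpd.posSemidef.sqrt
  have hS : IsUnit S.det := hpd.isUnit_det_sqrt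
  calc ∑ a, pgm p ρ hpd.posSemidef a = S⁻¹ * (∑ a, (p a : ℂ) • ρ a) * S⁻¹ := by
        simp only [pgm, S, ← Finset.sum_mul, ← Finset.mul_sum]
    _ = S⁻¹ * (S * S) * S⁻¹ := by rw [hpd.posSemidef.sqrt_mul_self]
    _ = 1 := by rw [← Matrix.mul_assoc, nonsing_inv_mul _ hS, Matrix.one_mul, mul_nonsing_inv _ hS]

theorem sum_mul_trace_pgm_mul (hpd : (∑ a, (p a : ℂ) • ρ a).PosDef) (x : Γ) :
    ∑ b, (p b : ℂ) * (pgm p ρ hpd.posSemidef x * ρ b).trace = p x * (ρ x).trace := by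
  simp only [mul_trace_pgm_mul_comm p ρ _ x, ← Finset.mul_sum, ← trace_sum, ← Finset.sum_mul]
  rw [sum_pgm p ρ hpd, Matrix.one_mul]

end PGM

theorem pgm_bayes_estimator_closed_form_general {n : ℕ} {Γ : Type*} [Fintype Γ]
    (p : Γ → ℝ) (hp : ∀ a, 0 < p a)
    (ρ : Γ → Matrix (Fin n) (Fin n) ℂ)
    (htr : ∀ a, (ρ a).trace = 1)
    (hpd : (∑ a, (p a : ℂ) • ρ a).PosDef) (x : Γ) :
    ∑ a, ((p a : ℂ) * (pgm p ρ hpd.posSemidef x * ρ a).trace /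
          ∑ b, (p b : ℂ) * (pgm p ρ hpd.posSemidef x * ρ b).trace) • ρ a
      = ∑ a, (pgm p ρ hpd.posSemidef a * ρ x).trace • ρ a := by
  have hx : (p x : ℂ) ≠ 0 := by exact_mod_cast (hp x).ne'
  rw [sum_mul_trace_pgm_mul p ρ hpd x, htr x, mul_one]
  refine Finset.sum_congr rfl fun a _ => ?_
  rw [mul_trace_pgm_mul_comm, mul_div_cancel_left₀ _ hx]

/-- The Bayesian mean estimator under the pretty good measurement has the closed
form: for every outcome `x`,
`ρ̂_B(x) = ∑ₐ (pₐ Tr(E_x ρₐ) / ∑_b p_b Tr(E_x ρ_b)) ρₐ = ∑ₐ Tr(Eₐ ρ_x) ρₐ`. -/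
theorem pgm_bayes_estimator_closed_form {n : ℕ} {Γ : Type*} [Fintype Γ]
    (p : Γ → ℝ) (hp : ∀ a, 0 < p a) (hsum : ∑ a, p a = 1)
    (ρ : Γ → Matrix (Fin n) (Fin n) ℂ)
    (hρ : ∀ a, (ρ a).PosSemidef) (htr : ∀ a, (ρ a).trace = 1)
    (hpd : (∑ a, (p a : ℂ) • ρ a).PosDef) (x : Γ) :
    ∑ a, ((p a : ℂ) * (pgm p ρ hpd.posSemidef x * ρ a).trace /
          ∑ b, (p b : ℂ) * (pgm p ρ hpd.posSemidef x * ρ b).trace) • ρ a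
      = ∑ a, (pgm p ρ hpd.posSemidef a * ρ x).trace • ρ a :=
  pgm_bayes_estimator_closed_form_general p hp ρ htr hpd x
end

section
/- Fix an integer d ≥ 1 and unit vectors u, v ∈ ℂ^d. Then ∫ |⟨u, φ⟩|² · |⟨v, φ⟩|² dμ_d(φ) = (1 + |⟨u, v⟩|²) / (d(d+1)). -/
open MeasureTheory Matrix

open ComplexConjugate

lemma Complex.I_pow_mul_conj_I_pow_ne_one {p q : ℕ} (hp : p ≤ 2) (hq : q ≤ 2) (hpq : p ≠ q) :
    I ^ p * conj I ^ q ≠ 1 := by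
  interval_cases p <;> interval_cases q <;> first | omega | norm_num [Complex.ext_iff, pow_succ]

section

variable {ι : Type*} [DecidableEq ι]

lemma Multiset.eq_and_eq_or_eq_and_eq_of_pair_eq_pair {i j k l : ι}
    (h : ({i, k} : Multiset ι) = {j, l}) : (i = j ∧ k = l) ∨ (i = l ∧ k = j) := by
  have hi := congrArg (count i) h
  have hk := congrArg (count k) h
  simp only [insert_eq_cons, count_cons, count_singleton] at hi hk
  split_ifs at hi hk <;> first | omega | (subst_vars; tauto)

lemma Multiset.count_pair_le_two (a i k : ι) : count a {i, k} ≤ 2 :=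
  (count_le_card _ _).trans (by simp)

lemma ite_I_mul_ite_I_eq_I_pow_count (a i k : ι) :
    (if i = a then Complex.I else 1) * (if k = a then Complex.I else 1)
      = Complex.I ^ Multiset.count a {i, k} := by
  simp only [Multiset.insert_eq_cons, Multiset.count_cons, Multiset.count_singleton]
  split_ifs <;> subst_vars <;> simp [pow_succ] at *

variable [Fintype ι]

/-- `((1 + i) / 2) • !![1, 1; 1, -1]` in the coordinates `a, b`: the phase `(1 + i) / 2` has
modulus `1 / √2` and keeps square roots out of the computation. -/
noncomputable def twoModeHadamard (a b : ι) : Matrix ι ι ℂ :=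
  fun x => if x = a then ((1 + Complex.I) / 2) • (Pi.single a 1 + Pi.single b 1)
    else if x = b then ((1 + Complex.I) / 2) • (Pi.single a 1 - Pi.single b 1)
    else Pi.single x 1

lemma twoModeHadamard_mem_unitaryGroup {a b : ι} (hab : a ≠ b) :
    twoModeHadamard a b ∈ unitaryGroup ι ℂ := by
  rw [mem_unitaryGroup_iff]
  ext x y
  rw [mul_apply', one_apply]
  change twoModeHadamard a b x ⬝ᵥ star (twoModeHadamard a b y) = _
  by_cases hxa : x = a <;> by_cases hxb : x = b <;> by_cases hya : y = a <;> by_cases hyb : y = b <;>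
    simp [twoModeHadamard, hxa, hxb, hya, hyb, hab, Ne.symm hab] <;>
    first | linear_combination (-1 / 2 : ℂ) * Complex.I_sq | grind

lemma twoModeHadamard_mulVec_left (a b : ι) (φ : ι → ℂ) :
    (twoModeHadamard a b *ᵥ φ) a = (1 + Complex.I) / 2 * (φ a + φ b) := by
  simp [mulVec, twoModeHadamard, dotProduct, mul_assoc, ← Finset.mul_sum, add_mul,
    Finset.sum_add_distrib, Pi.single_apply]

lemma twoModeHadamard_mulVec_right {a b : ι} (hab : a ≠ b) (φ : ι → ℂ) :
    (twoModeHadamard a b *ᵥ φ) b = (1 + Complex.I) / 2 * (φ a - φ b) := by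
  simp [mulVec, twoModeHadamard, Ne.symm hab, dotProduct, mul_assoc, ← Finset.mul_sum, sub_mul,
    Finset.sum_sub_distrib, Pi.single_apply]

structure IsUnitarilyInvariantState (ν : Measure (ι → ℂ)) : Prop where
  isProbabilityMeasure : IsProbabilityMeasure ν
  sum_norm_sq : ∀ᵐ φ ∂ν, ∑ i, ‖φ i‖ ^ 2 = 1
  map_mulVec : ∀ V ∈ unitaryGroup ι ℂ, ν.map (V *ᵥ ·) = ν

noncomputable def fourthMoment (ν : Measure (ι → ℂ)) (i j k l : ι) : ℂ :=
  ∫ φ, φ i * conj (φ j) * (φ k * conj (φ l)) ∂ν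

namespace IsUnitarilyInvariantState

variable {ν : Measure (ι → ℂ)}

lemma norm_le_one (hν : IsUnitarilyInvariantState ν) : ∀ᵐ φ ∂ν, ∀ x, ‖φ x‖ ≤ 1 := by
  filter_upwards [hν.sum_norm_sq] with φ h x
  have : ‖φ x‖ ^ 2 ≤ 1 :=
    h ▸ Finset.single_le_sum (f := fun i => ‖φ i‖ ^ 2) (fun i _ => by positivity) (Finset.mem_univ x)
  nlinarith [norm_nonneg (φ x)]

lemma integrable_fourthMonomial (hν : IsUnitarilyInvariantState ν) (i j k l : ι) :
    Integrable (fun φ : ι → ℂ => φ i * conj (φ j) * (φ k * conj (φ l))) ν := by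
  have := hν.isProbabilityMeasure
  refine .mono' (integrable_const 1) (Continuous.aestronglyMeasurable (by fun_prop)) ?_
  filter_upwards [hν.norm_le_one] with φ h
  simpa using mul_le_one₀ (mul_le_one₀ (h i) (norm_nonneg _) (h j)) (by positivity)
    (mul_le_one₀ (h k) (norm_nonneg _) (h l))

lemma integral_comp_mulVec (hν : IsUnitarilyInvariantState ν) {V : Matrix ι ι ℂ}
    (hV : V ∈ unitaryGroup ι ℂ) {g : (ι → ℂ) → ℂ} (hg : AEStronglyMeasurable g ν) :
    ∫ φ, g (V *ᵥ φ) ∂ν = ∫ φ, g φ ∂ν := by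
  rw [← integral_map (by fun_prop), hν.map_mulVec V hV]
  rwa [hν.map_mulVec V hV]

lemma fourthMoment_comp_perm (hν : IsUnitarilyInvariantState ν) (σ : Equiv.Perm ι)
    (i j k l : ι) : fourthMoment ν (σ i) (σ j) (σ k) (σ l) = fourthMoment ν i j k l := by
  have hσ : σ.permMatrix ℂ ∈ unitaryGroup ι ℂ := by
    rw [mem_unitaryGroup_iff', star_eq_conjTranspose, conjTranspose_permMatrix, ← permMatrix_mul,
      mul_inv_cancel, permMatrix_one]
  simpa [fourthMoment, permMatrix_mulVec] using hν.integral_comp_mulVec hσ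
    (hν.integrable_fourthMonomial i j k l).aestronglyMeasurable

lemma mul_fourthMoment_of_diagonal (hν : IsUnitarilyInvariantState ν) {e : ι → ℂ}
    (he : ∀ x, conj (e x) * e x = 1) (i j k l : ι) :
    e i * conj (e j) * (e k * conj (e l)) * fourthMoment ν i j k l = fourthMoment ν i j k l := by
  have hD : diagonal e ∈ unitaryGroup ι ℂ := by
    rw [mem_unitaryGroup_iff', star_eq_conjTranspose, diagonal_conjTranspose, diagonal_mul_diagonal,
      ← diagonal_one]
    exact congrArg diagonal (funext he)
  rw [fourthMoment, ← integral_const_mul, ← hν.integral_comp_mulVec hD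
    (hν.integrable_fourthMonomial i j k l).aestronglyMeasurable]
  congr 1 with φ
  simp only [mulVec_diagonal, map_mul]
  ring

lemma fourthMoment_eq_zero_of_count_ne (hν : IsUnitarilyInvariantState ν) {i j k l : ι} (a : ι)
    (h : Multiset.count a {i, k} ≠ Multiset.count a {j, l}) : fourthMoment ν i j k l = 0 := by
  have hphase := hν.mul_fourthMoment_of_diagonal (e := fun x => if x = a then Complex.I else 1)
    (fun x => by by_cases hx : x = a <;> simp [hx]) i j k l
  rw [mul_mul_mul_comm, ← map_mul, ite_I_mul_ite_I_eq_I_pow_count, ite_I_mul_ite_I_eq_I_pow_count,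
    map_pow] at hphase
  exact eq_zero_of_mul_eq_self_left (Complex.I_pow_mul_conj_I_pow_ne_one
    (Multiset.count_pair_le_two a i k) (Multiset.count_pair_le_two a j l) h) hphase

lemma fourthMoment_diag_eq_two_mul (hν : IsUnitarilyInvariantState ν) {a b : ι} (hab : a ≠ b) :
    fourthMoment ν a a a a = 2 * fourthMoment ν a a b b := by
  set c : ℂ := (1 + Complex.I) / 2 with hc_def
  have hc : c * conj c = 1 / 2 := by
    rw [hc_def, map_div₀, map_add, map_one, Complex.conj_I, Complex.conj_ofNat]
    linear_combination (-1 / 4 : ℂ) * Complex.I_sq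
  have hm := hν.integrable_fourthMonomial
  have hmix : fourthMoment ν a a b b = (c * conj c) ^ 2 * (fourthMoment ν a a a a
      - fourthMoment ν a b a b - fourthMoment ν b a b a + fourthMoment ν b b b b) := by
    calc fourthMoment ν a a b b
        = ∫ φ, (twoModeHadamard a b *ᵥ φ) a * conj ((twoModeHadamard a b *ᵥ φ) a) *
            ((twoModeHadamard a b *ᵥ φ) b * conj ((twoModeHadamard a b *ᵥ φ) b)) ∂ν :=
          (hν.integral_comp_mulVec (twoModeHadamard_mem_unitaryGroup hab)
            (hm a a b b).aestronglyMeasurable).symm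
      _ = ∫ φ, (c * conj c) ^ 2 * (φ a * conj (φ a) * (φ a * conj (φ a))
            - φ a * conj (φ b) * (φ a * conj (φ b)) - φ b * conj (φ a) * (φ b * conj (φ a))
            + φ b * conj (φ b) * (φ b * conj (φ b))) ∂ν := by
          congr 1 with φ
          simp only [twoModeHadamard_mulVec_left, twoModeHadamard_mulVec_right hab, map_mul,
            map_add, map_sub]
          ring
      _ = _ := by
          simp (disch := fun_prop) only [integral_const_mul, integral_add, integral_sub,
            fourthMoment]
  have hvanish : ∀ {x y : ι}, x ≠ y → fourthMoment ν x y x y = 0 := fun {x y} hxy =>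
    hν.fourthMoment_eq_zero_of_count_ne x (by simp [hxy])
  have hswap := hν.fourthMoment_comp_perm (Equiv.swap a b) a a a a
  rw [Equiv.swap_apply_left] at hswap
  rw [hmix, hvanish hab, hvanish (Ne.symm hab), hswap, hc]
  ring

lemma sum_sum_fourthMoment (hν : IsUnitarilyInvariantState ν) :
    ∑ i, ∑ k, fourthMoment ν i i k k = 1 := by
  have := hν.isProbabilityMeasure
  have hm := hν.integrable_fourthMonomial
  calc ∑ i, ∑ k, fourthMoment ν i i k k
      = ∫ φ, ∑ i, ∑ k, φ i * conj (φ i) * (φ k * conj (φ k)) ∂ν := by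
        simp (disch := fun_prop) only [integral_finsetSum, fourthMoment]
    _ = ∫ _, 1 ∂ν := by
        refine integral_congr_ae ?_
        filter_upwards [hν.sum_norm_sq] with φ h
        rw [← Finset.sum_mul_sum]
        simp only [Complex.mul_conj', ← Complex.ofReal_pow, ← Complex.ofReal_sum, h]
        simp
    _ = 1 := by simp

lemma fourthMoment_self_self (hν : IsUnitarilyInvariantState ν) (i k : ι) :
    fourthMoment ν i i k k
      = (1 + if i = k then 1 else 0) / (Fintype.card ι * (Fintype.card ι + 1)) := by
  set A := fourthMoment ν i i i i with hA_def
  have hdiag : ∀ x, fourthMoment ν x x x x = A := fun x => by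
    simpa [hA_def] using (hν.fourthMoment_comp_perm (Equiv.swap i x) x x x x).symm
  have hpair : ∀ x y, fourthMoment ν x x y y = A / 2 * (1 + if x = y then 1 else 0) := by
    intro x y
    by_cases hxy : x = y
    · subst hxy
      rw [hdiag]
      norm_num
    · rw [← hdiag x, hν.fourthMoment_diag_eq_two_mul hxy, if_neg hxy]
      ring
  have hA : A / 2 * (Fintype.card ι * (Fintype.card ι + 1)) = 1 := by
    have hsum := hν.sum_sum_fourthMoment
    simp only [hpair, ← Finset.mul_sum, Finset.sum_add_distrib, Finset.sum_ite_eq, Finset.mem_univ,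
      if_true, Finset.sum_const, Finset.card_univ, nsmul_eq_mul, mul_one] at hsum
    linear_combination hsum
  have hn : (Fintype.card ι : ℂ) * (Fintype.card ι + 1) ≠ 0 := by
    have : Nonempty ι := ⟨i⟩
    exact mul_ne_zero (Nat.cast_ne_zero.mpr Fintype.card_ne_zero) (Nat.cast_add_one_ne_zero _)
  rw [hpair, eq_div_iff hn, mul_right_comm, hA, one_mul]

theorem fourthMoment_eq (hν : IsUnitarilyInvariantState ν) (i j k l : ι) :
    fourthMoment ν i j k l
      = ((if i = j then 1 else 0) * (if k = l then 1 else 0)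
          + (if i = l then 1 else 0) * (if k = j then 1 else 0))
        / (Fintype.card ι * (Fintype.card ι + 1)) := by
  by_cases hpair : ({i, k} : Multiset ι) = {j, l}
  · have hswap : fourthMoment ν i k k i = fourthMoment ν i i k k := by
      simp only [fourthMoment]
      congr 1 with φ
      ring
    rcases Multiset.eq_and_eq_or_eq_and_eq_of_pair_eq_pair hpair with ⟨rfl, rfl⟩ | ⟨rfl, rfl⟩
    · rw [hν.fourthMoment_self_self]
      by_cases hik : i = k <;> simp [hik, eq_comm (a := k)]
    · rw [hswap, hν.fourthMoment_self_self]
      by_cases hik : i = k <;> simp [hik, eq_comm (a := k)]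
  · obtain ⟨a, ha⟩ : ∃ a, Multiset.count a {i, k} ≠ Multiset.count a {j, l} := by
      by_contra! h
      exact hpair (Multiset.ext.mpr h)
    have h1 : ¬(i = j ∧ k = l) := by
      rintro ⟨rfl, rfl⟩
      exact hpair rfl
    have h2 : ¬(i = l ∧ k = j) := by
      rintro ⟨rfl, rfl⟩
      exact hpair (Multiset.pair_comm _ _)
    rw [hν.fourthMoment_eq_zero_of_count_ne a ha]
    rw [not_and_or] at h1 h2
    rcases h1 with h1 | h1 <;> rcases h2 with h2 | h2 <;> simp [h1, h2]

theorem integral_dotProduct_mul (hν : IsUnitarilyInvariantState ν) (u w v x : ι → ℂ) :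
    ∫ φ, (star u ⬝ᵥ φ) * conj (star w ⬝ᵥ φ) * ((star v ⬝ᵥ φ) * conj (star x ⬝ᵥ φ)) ∂ν
      = ((star u ⬝ᵥ w) * (star v ⬝ᵥ x) + (star u ⬝ᵥ x) * (star v ⬝ᵥ w))
          / (Fintype.card ι * (Fintype.card ι + 1)) := by
  have hm := hν.integrable_fourthMonomial
  have hexpand : ∀ φ : ι → ℂ,
      (star u ⬝ᵥ φ) * conj (star w ⬝ᵥ φ) * ((star v ⬝ᵥ φ) * conj (star x ⬝ᵥ φ))
        = ∑ i, ∑ j, ∑ k, ∑ l, conj (u i) * w j * (conj (v k) * x l)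
            * (φ i * conj (φ j) * (φ k * conj (φ l))) := by
    intro φ
    simp only [dotProduct, map_sum, map_mul, Pi.star_apply, RCLike.star_def, Complex.conj_conj,
      Finset.sum_mul_sum]
    refine Finset.sum_congr rfl fun i _ => ?_
    rw [Finset.sum_comm]
    refine Finset.sum_congr rfl fun j _ => Finset.sum_congr rfl fun k _ =>
      Finset.sum_congr rfl fun l _ => ?_
    ring
  simp_rw [hexpand]
  simp (disch := fun_prop) only [integral_finsetSum, integral_const_mul, ← fourthMoment.eq_1,
    hν.fourthMoment_eq]
  simp only [← mul_div_assoc, ← Finset.sum_div, mul_add, Finset.sum_add_distrib]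
  congr 1
  simp only [mul_ite, mul_one, mul_zero, Finset.sum_ite_eq, Finset.sum_ite_eq', Finset.mem_univ,
    if_true, Finset.sum_ite_irrel, Finset.sum_const_zero, dotProduct, Pi.star_apply, RCLike.star_def,
    Finset.sum_mul_sum, add_right_inj]
  exact Finset.sum_congr rfl fun i _ => Finset.sum_congr rfl fun j _ => by ring

end IsUnitarilyInvariantState

end

lemma isUnitarilyInvariantState_pureStateMeasure {d : ℕ} (hd : 0 < d)
    {μ : Measure (Fin d → Fin d → ℂ)} (hμ : IsHaarUnitary μ) :
    IsUnitarilyInvariantState (pureStateMeasure hd μ) := by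
  obtain ⟨hprob, hunitary, hinv⟩ := hμ
  have hcol : Measurable fun (U : Fin d → Fin d → ℂ) i => U i ⟨0, hd⟩ := by fun_prop
  refine ⟨Measure.isProbabilityMeasure_map hcol.aemeasurable, ?_, fun V hV => ?_⟩
  · rw [pureStateMeasure, ae_map_iff hcol.aemeasurable
      (measurableSet_eq_fun (by fun_prop) measurable_const)]
    filter_upwards [hunitary] with U hU
    have h := congrFun₂ (mem_unitaryGroup_iff'.mp hU) ⟨0, hd⟩ ⟨0, hd⟩
    simpa [mul_apply, Complex.conj_mul', ← Complex.ofReal_pow, ← Complex.ofReal_sum] using h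
  · have hmul : Measurable fun U : Fin d → Fin d → ℂ => of.symm (V * of U) :=
      show Measurable fun (U : Fin d → Fin d → ℂ) i j => ∑ k, V i k * U k j by fun_prop
    rw [pureStateMeasure, Measure.map_map (by fun_prop) hcol]
    conv_rhs => rw [← hinv V hV, Measure.map_map hcol hmul]
    rfl

/-- For unit vectors `u, v ∈ ℂ^d`,
`∫ |⟨u, φ⟩|² |⟨v, φ⟩|² dμ_d(φ) = (1 + |⟨u, v⟩|²) / (d (d + 1))`. -/
theorem haar_second_moment_overlap {d : ℕ} (hd : 0 < d)
    (μU : Measure (Fin d → Fin d → ℂ)) (hμU : IsHaarUnitary μU)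
    (u v : Fin d → ℂ) (hu : ∑ i, ‖u i‖ ^ 2 = 1) (hv : ∑ i, ‖v i‖ ^ 2 = 1) :
    ∫ φ, ‖cInner u φ‖ ^ 2 * ‖cInner v φ‖ ^ 2 ∂(pureStateMeasure hd μU)
      = (1 + ‖cInner u v‖ ^ 2) / (d * (d + 1)) := by
  have hself : ∀ w : Fin d → ℂ, ∑ i, ‖w i‖ ^ 2 = 1 → star w ⬝ᵥ w = 1 := fun w hw => by
    simp [dotProduct, Complex.conj_mul', ← Complex.ofReal_pow, ← Complex.ofReal_sum, hw]
  have key := (isUnitarilyInvariantState_pureStateMeasure hd hμU).integral_dotProduct_mul u u v v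
  rw [hself u hu, hself v hv, star_dotProduct v u, Complex.star_def, Complex.mul_conj',
    Fintype.card_fin, one_mul] at key
  apply Complex.ofReal_injective
  rw [← integral_complex_ofReal]
  push_cast
  simp only [Complex.mul_conj'] at key
  exact key
end

section
/- Fix integers d ≥ 1 and N ≥ 1. The N-th moment of the Haar pure-state measure is the normalized symmetrizer: ∫ P_φ^{⊗N} dμ_d(φ) = ((d−1)! / (N+d−1)!) · Σ_{σ ∈ S_N} P_σ, entrywise as matrices indexed by functions f, g : Fin N → Fin d, where P_φ^{⊗N} has entries (P_φ^{⊗N})_{f,g} = ∏_{i=1}^N φ(f i) · conj(φ(g i)), and P_σ is the permutation operator with entries (P_σ)_{f,g} = 1 if f = g ∘ σ and 0 otherwise. Equivalently, ∫ P_φ^{⊗N} dμ_d(φ) = Π₊ / C(N+d−1, N) where Π₊ = (1/N!) Σ_{σ ∈ S_N} P_σ is the orthogonal projector onto the symmetric subspace of (ℂ^d)^{⊗N}. -/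
open MeasureTheory Matrix

/-
Write `M f g` for the entries of the moment and `c_N = ∫ |φ₀|^{2N}`. Invariance under diagonal
unitaries kills `M f g` unless `f` and `g` take each value equally often, i.e. have the same
content `s ∈ Sym (Fin d) N`, and then `M f g` is a moment `m s` of the `|φ_x|²`. Invariance under
a unitary with prescribed first row gives `∫ |⟨q, φ⟩|^{2N} = c_N ‖q‖^{2N}`; both sides are
polynomials in real `q`, and comparing the coefficients of `q^{2s}` yields `m s · K s = c_N`,
where `K s` is the number of tuples of content `s`. By orbit–stabilizer `1 / K s` is
`#{σ | f = g ∘ σ} / N!`. Finally the trace `∑ f, M f f = ∫ ‖φ‖^{2N} = 1` is a sum of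
`#Sym (Fin d) N = C(N + d - 1, N)` contributions `c_N`.
-/

open Finset ComplexConjugate

namespace Sym

variable {α : Type*} {n : ℕ}

def ofFn (f : Fin n → α) : Sym α n := ⟨List.ofFn f, by simp⟩

lemma coe_ofFn (f : Fin n → α) : (ofFn f : Multiset α) = univ.val.map f := by
  simp [ofFn]

lemma count_ofFn [DecidableEq α] (f : Fin n → α) (x : α) :
    (ofFn f : Multiset α).count x = #{i | f i = x} := by
  rw [coe_ofFn, Multiset.count_map, Finset.card, filter_val]
  simp_rw [eq_comm]

lemma ofFn_surjective : Function.Surjective (ofFn : (Fin n → α) → Sym α n) := by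
  rintro ⟨⟨l⟩, hl⟩
  simp only [Multiset.quot_mk_to_coe'', Multiset.coe_card] at hl
  subst hl
  exact ⟨l.get, Sym.ext (by simp [ofFn])⟩

lemma ofFn_comp_perm (f : Fin n → α) (σ : Equiv.Perm (Fin n)) : ofFn (f ∘ σ) = ofFn f :=
  Sym.ext <| Multiset.coe_eq_coe.2 (σ.ofFn_comp_perm f)

lemma ofFn_eq_ofFn_iff [DecidableEq α] {f g : Fin n → α} :
    ofFn f = ofFn g ↔ ∃ σ : Equiv.Perm (Fin n), f = g ∘ σ := by
  refine ⟨fun h => ?_, fun ⟨σ, hσ⟩ => hσ ▸ ofFn_comp_perm g σ⟩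
  have hcard x : Fintype.card {i // f i = x} = Fintype.card {i // g i = x} := by
    simp only [Fintype.card_subtype, ← count_ofFn, h]
  let e x : {i // f i = x} ≃ {i // g i = x} := Fintype.equivOfCardEq (hcard x)
  refine ⟨(Equiv.sigmaFiberEquiv f).symm.trans
    ((Equiv.sigmaCongrRight e).trans (Equiv.sigmaFiberEquiv g)), funext fun i => ?_⟩
  exact (e (f i) ⟨i, rfl⟩).2.symm

lemma card_perm_comp_eq_comp [DecidableEq α] (g : Fin n → α) (τ : Equiv.Perm (Fin n)) :
    #{σ : Equiv.Perm (Fin n) | g ∘ σ = g ∘ τ} = #{σ : Equiv.Perm (Fin n) | g ∘ σ = g} := by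
  refine (card_equiv (Equiv.mulRight τ) fun σ => ?_).symm
  simp only [mem_filter, mem_univ, true_and, Equiv.coe_mulRight, Equiv.Perm.coe_mul,
    ← Function.comp_assoc]
  exact τ.surjective.injective_comp_right.eq_iff.symm

lemma card_fiber_ofFn_mul_card_perm [Fintype α] [DecidableEq α] {f g : Fin n → α}
    (h : ofFn f = ofFn g) :
    #{k | ofFn k = ofFn g} * #{σ : Equiv.Perm (Fin n) | f = g ∘ σ} = n.factorial := by
  have hfiber : ∀ k ∈ ({k | ofFn k = ofFn g} : Finset (Fin n → α)),
      #{σ : Equiv.Perm (Fin n) | g ∘ σ = k} = #{σ : Equiv.Perm (Fin n) | g ∘ σ = g} := by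
    intro k hk
    obtain ⟨τ, rfl⟩ := ofFn_eq_ofFn_iff.1 (mem_filter.1 hk).2
    exact card_perm_comp_eq_comp g τ
  obtain ⟨τ, rfl⟩ := ofFn_eq_ofFn_iff.1 h
  have hperm : n.factorial = #(univ : Finset (Equiv.Perm (Fin n))) := by
    rw [card_univ, Fintype.card_perm, Fintype.card_fin]
  have hmaps : ∀ σ ∈ (univ : Finset (Equiv.Perm (Fin n))),
      g ∘ σ ∈ ({k | ofFn k = ofFn g} : Finset (Fin n → α)) := fun σ _ =>
    mem_filter.2 ⟨mem_univ _, ofFn_comp_perm g σ⟩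
  rw [hperm, card_eq_sum_card_fiberwise hmaps, sum_congr rfl hfiber, sum_const, smul_eq_mul]
  simp_rw [eq_comm (a := g ∘ τ), card_perm_comp_eq_comp]

lemma toFinsupp_ofFn [DecidableEq α] (f : Fin n → α) :
    Multiset.toFinsupp (ofFn f : Multiset α) = ∑ i, Finsupp.single (f i) 1 := by
  ext x
  simp [count_ofFn, Finsupp.finsetSum_apply, Finsupp.single_apply]

lemma _root_.MvPolynomial.prod_X_eq_monomial_toFinsupp_ofFn {R : Type*} [CommSemiring R]
    [DecidableEq α] (f : Fin n → α) :
    ∏ i, (MvPolynomial.X (f i) : MvPolynomial α R) =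
      MvPolynomial.monomial (Multiset.toFinsupp (ofFn f : Multiset α)) 1 := by
  rw [toFinsupp_ofFn, MvPolynomial.monomial_sum_one]
  rfl

/- Both sides are polynomials in `q`; the coefficient of `q^{2s}` is `K² · b s` on the left and
`K · c` on the right, where `K = #{f | ofFn f = s}` is positive. -/
open MvPolynomial Multiset in
lemma mul_card_fiber_ofFn_eq_of_forall_sum_eq [Fintype α] [DecidableEq α] (b : Sym α n → ℝ)
    (c : ℝ) (h : ∀ q : α → ℝ, ∑ f : Fin n → α, ∑ g : Fin n → α,
      (∏ i, q (f i) * q (g i)) * (if ofFn f = ofFn g then b (ofFn f) else 0) =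
        (∑ x, q x ^ 2) ^ n * c)
    (s : Sym α n) : b s * #{f | ofFn f = s} = c := by
  have hX (a : ℝ) (f g : Fin n → α) :
      monomial (toFinsupp (ofFn f : Multiset α) + toFinsupp (ofFn g : Multiset α)) a =
        (∏ i, X (f i) * X (g i)) * C a := by
    rw [prod_mul_distrib, prod_X_eq_monomial_toFinsupp_ofFn, prod_X_eq_monomial_toFinsupp_ofFn,
      monomial_mul, mul_comm, C_mul_monomial, mul_one, mul_one]
  have hpoly : ∑ f : Fin n → α, ∑ g : Fin n → α,
      monomial (toFinsupp (ofFn f : Multiset α) + toFinsupp (ofFn g : Multiset α))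
        (if ofFn f = ofFn g then b (ofFn f) else 0) =
      ∑ k : Fin n → α,
        monomial (toFinsupp (ofFn k : Multiset α) + toFinsupp (ofFn k : Multiset α)) c := by
    simp only [hX]
    refine MvPolynomial.funext fun q => ?_
    have hq := h q
    rw [Fintype.sum_pow, sum_mul] at hq
    simpa [pow_two] using hq
  have he (f : Fin n → α) :
      toFinsupp (ofFn f : Multiset α) = toFinsupp (s : Multiset α) ↔ ofFn f = s := by
    rw [EmbeddingLike.apply_eq_iff_eq, Sym.coe_inj]
  have hdouble (u : α →₀ ℕ) : u + u = toFinsupp (s : Multiset α) + toFinsupp (s : Multiset α) ↔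
      u = toFinsupp (s : Multiset α) := by
    refine ⟨fun huu => Finsupp.ext fun x => ?_, fun hu => hu ▸ rfl⟩
    have := DFunLike.congr_fun huu x
    simp only [Finsupp.add_apply] at this
    omega
  have hleft (f g : Fin n → α) :
      (if toFinsupp (ofFn f : Multiset α) + toFinsupp (ofFn g : Multiset α) =
          toFinsupp (s : Multiset α) + toFinsupp (s : Multiset α) then
        (if ofFn f = ofFn g then b (ofFn f) else 0) else 0) =
        (if ofFn f = s then 1 else 0) * (if ofFn g = s then b s else 0) := by
    by_cases hfg : ofFn f = ofFn g
    · simp only [← hfg, hdouble, he]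
      split_ifs with hs <;> simp [hs]
    · simp only [hfg, if_false, ite_self]
      split_ifs with hf hg
      · exact absurd (hf.trans hg.symm) hfg
      all_goals simp
  have hcoeff :=
    congrArg (coeff (toFinsupp (s : Multiset α) + toFinsupp (s : Multiset α))) hpoly
  simp only [coeff_sum, coeff_monomial, hleft, hdouble, he] at hcoeff
  rw [← sum_mul_sum, sum_boole, ← sum_filter, ← sum_filter, sum_const, sum_const,
    nsmul_eq_mul, nsmul_eq_mul, ← mul_assoc] at hcoeff
  have hK : (#{f | ofFn f = s} : ℝ) ≠ 0 := by
    obtain ⟨f, rfl⟩ := ofFn_surjective s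
    exact Nat.cast_ne_zero.2 (card_ne_zero_of_mem (Finset.mem_filter.2 ⟨mem_univ f, rfl⟩))
  exact mul_left_cancel₀ hK (by linear_combination hcoeff)

end Sym

lemma Matrix.sum_normSq_col_eq_one {ι : Type*} [Fintype ι] [DecidableEq ι] {U : Matrix ι ι ℂ}
    (hU : U ∈ unitaryGroup ι ℂ) (j : ι) : ∑ i, Complex.normSq (U i j) = 1 := by
  have h := congr_fun₂ ((mem_unitaryGroup_iff').mp hU) j j
  rw [mul_apply, one_apply_eq] at h
  have : ((∑ i, Complex.normSq (U i j) : ℝ) : ℂ) = 1 := by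
    push_cast
    simpa [Complex.normSq_eq_conj_mul_self] using h
  exact_mod_cast this

lemma Matrix.exists_mem_unitaryGroup_row_eq {ι : Type*} [Fintype ι] [DecidableEq ι] (i₀ : ι)
    {v : ι → ℂ} (hv : ∑ j, Complex.normSq (v j) = 1) :
    ∃ V ∈ unitaryGroup ι ℂ, V i₀ = v := by
  let u : EuclideanSpace ℂ ι := WithLp.toLp 2 (star v)
  have hu : Orthonormal ℂ (({i₀} : Set ι).domRestrict fun _ => u) := by
    rw [orthonormal_subsingleton_iff]
    intro _
    simp [u, EuclideanSpace.norm_eq, ← Complex.normSq_eq_norm_sq, hv]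
  obtain ⟨b, hb⟩ := hu.exists_orthonormalBasis_extension_of_card_eq (by simp)
  refine ⟨star ((EuclideanSpace.basisFun ι ℂ).toBasis.toMatrix b),
    Unitary.star_mem ((EuclideanSpace.basisFun ι ℂ).toMatrix_orthonormalBasis_mem_unitary b),
    funext fun j => ?_⟩
  simp [Module.Basis.toMatrix_apply, hb i₀ rfl, u]

structure IsUnitarilyInvariantSphereMeasure {d : ℕ} (ν : Measure (Fin d → ℂ)) : Prop where
  isProbabilityMeasure : IsProbabilityMeasure ν
  ae_sum_normSq : ∀ᵐ φ ∂ν, ∑ x, Complex.normSq (φ x) = 1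
  map_mulVec : ∀ V ∈ unitaryGroup (Fin d) ℂ, ν.map (V *ᵥ ·) = ν

theorem isUnitarilyInvariantSphereMeasure_pureStateMeasure {d : ℕ} (hd : 0 < d)
    {μU : Measure (Fin d → Fin d → ℂ)} (hμU : IsHaarUnitary μU) :
    IsUnitarilyInvariantSphereMeasure (pureStateMeasure hd μU) := by
  obtain ⟨hprob, hunitary, hinv⟩ := hμU
  have hcol : Measurable fun U : Fin d → Fin d → ℂ => fun i => U i ⟨0, hd⟩ := by fun_prop
  refine ⟨Measure.isProbabilityMeasure_map hcol.aemeasurable, ?_, fun V hV => ?_⟩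
  · refine (ae_map_iff hcol.aemeasurable ?_).2 <| hunitary.mono fun U hU =>
      sum_normSq_col_eq_one hU _
    exact measurableSet_eq_fun (by fun_prop) measurable_const
  · have hmul : Measurable fun U : Fin d → Fin d → ℂ => of.symm (V * of U) := by
      change Measurable fun U : Fin d → Fin d → ℂ => fun i j => ∑ k, V i k * U k j
      fun_prop
    rw [pureStateMeasure, Measure.map_map (by fun_prop) hcol]
    conv_rhs => rw [← hinv V hV, Measure.map_map hcol hmul]
    rfl

noncomputable def tensorMoment {d N : ℕ} (ν : Measure (Fin d → ℂ)) (f g : Fin N → Fin d) : ℂ :=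
  ∫ φ, ∏ i, φ (f i) * conj (φ (g i)) ∂ν

noncomputable def symMoment {d N : ℕ} (ν : Measure (Fin d → ℂ)) (s : Sym (Fin d) N) : ℝ :=
  ∫ φ, ((s : Multiset (Fin d)).map fun x => Complex.normSq (φ x)).prod ∂ν

lemma tensorMoment_comp_perm_right {d N : ℕ} (ν : Measure (Fin d → ℂ)) (f g : Fin N → Fin d)
    (σ : Equiv.Perm (Fin N)) : tensorMoment ν f (g ∘ σ) = tensorMoment ν f g := by
  simp only [tensorMoment, prod_mul_distrib, Function.comp_apply]
  congr with φ
  rw [Equiv.prod_comp σ fun i => conj (φ (g i))]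

lemma tensorMoment_self {d N : ℕ} (ν : Measure (Fin d → ℂ)) (f : Fin N → Fin d) :
    tensorMoment ν f f = symMoment ν (Sym.ofFn f) := by
  simp only [tensorMoment, symMoment, Sym.coe_ofFn, Multiset.map_map, Function.comp_def,
    ← Finset.prod_eq_multiset_prod, ← integral_complex_ofReal, Complex.ofReal_prod,
    Complex.mul_conj]

namespace IsUnitarilyInvariantSphereMeasure

variable {d : ℕ} {ν : Measure (Fin d → ℂ)}

lemma ae_norm_le_one (hν : IsUnitarilyInvariantSphereMeasure ν) :
    ∀ᵐ φ ∂ν, ∀ x, ‖φ x‖ ≤ 1 := by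
  refine hν.ae_sum_normSq.mono fun φ hφ x => ?_
  have : Complex.normSq (φ x) ≤ 1 :=
    hφ ▸ single_le_sum (fun y _ => Complex.normSq_nonneg (φ y)) (mem_univ x)
  rw [Complex.normSq_eq_norm_sq] at this
  exact (sq_le_one_iff₀ (norm_nonneg _)).1 this

lemma integrable_prod_mul_conj (hν : IsUnitarilyInvariantSphereMeasure ν) {N : ℕ}
    (f g : Fin N → Fin d) : Integrable (fun φ => ∏ i, φ (f i) * conj (φ (g i))) ν := by
  have := hν.isProbabilityMeasure
  refine (integrable_const (1 : ℝ)).mono' (by fun_prop) <| hν.ae_norm_le_one.mono fun φ hφ => ?_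
  rw [norm_prod]
  exact prod_le_one (fun _ _ => norm_nonneg _) fun i _ => by
    rw [norm_mul, Complex.norm_conj]
    exact mul_le_one₀ (hφ _) (norm_nonneg _) (hφ _)

lemma integral_comp_mulVec (hν : IsUnitarilyInvariantSphereMeasure ν)
    {V : Matrix (Fin d) (Fin d) ℂ} (hV : V ∈ unitaryGroup (Fin d) ℂ) {E : Type*}
    [NormedAddCommGroup E] [NormedSpace ℝ E] {F : (Fin d → ℂ) → E}
    (hF : AEStronglyMeasurable F ν) :
    ∫ φ, F (V *ᵥ φ) ∂ν = ∫ φ, F φ ∂ν := by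
  rw [← integral_map (by fun_prop) (by rwa [hν.map_mulVec V hV]), hν.map_mulVec V hV]

lemma tensorMoment_eq_prod_mul (hν : IsUnitarilyInvariantSphereMeasure ν) {w : Fin d → ℂ}
    (hw : ∀ x, ‖w x‖ = 1) {N : ℕ} (f g : Fin N → Fin d) :
    tensorMoment ν f g = (∏ i, w (f i) * conj (w (g i))) * tensorMoment ν f g := by
  have hV : diagonal w ∈ unitaryGroup (Fin d) ℂ := by
    simp [mem_unitaryGroup_iff', star_eq_conjTranspose, diagonal_conjTranspose,
      diagonal_mul_diagonal, ← Complex.normSq_eq_conj_mul_self, Complex.normSq_eq_norm_sq, hw]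
  calc tensorMoment ν f g
      = ∫ φ, ∏ i, (diagonal w *ᵥ φ) (f i) * conj ((diagonal w *ᵥ φ) (g i)) ∂ν :=
        (hν.integral_comp_mulVec hV (by fun_prop)).symm
    _ = _ := by
        simp only [mulVec_diagonal, map_mul, tensorMoment, ← integral_const_mul,
          ← prod_mul_distrib]
        congr with φ
        exact prod_congr rfl fun i _ => by ring

/- The phase `c = exp (iπ / (a - b))` at the coordinate `x` multiplies the integrand by
`c ^ a * conj c ^ b = -1`. -/
lemma tensorMoment_eq_zero_of_card_ne (hν : IsUnitarilyInvariantSphereMeasure ν) {N : ℕ}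
    {f g : Fin N → Fin d} {x : Fin d} (h : #{i | f i = x} ≠ #{i | g i = x}) :
    tensorMoment ν f g = 0 := by
  set a := #{i | f i = x}
  set b := #{i | g i = x}
  set θ : ℝ := Real.pi / (a - b)
  set c := Complex.exp (θ * Complex.I)
  have hθ : ((a : ℝ) - b) * θ = Real.pi :=
    mul_div_cancel₀ _ (sub_ne_zero.2 (by exact_mod_cast h))
  have hphase : c ^ a * conj c ^ b = -1 := by
    rw [← Complex.exp_conj, map_mul, Complex.conj_ofReal, Complex.conj_I, ← Complex.exp_nat_mul,
      ← Complex.exp_nat_mul, ← Complex.exp_add, ← Complex.exp_pi_mul_I, ← hθ]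
    push_cast
    ring_nf
  have hw : ∀ y, ‖(if y = x then c else 1)‖ = 1 := fun y => by
    split_ifs
    · exact Complex.norm_exp_ofReal_mul_I θ
    · exact norm_one
  have := hν.tensorMoment_eq_prod_mul hw f g
  simp only [prod_mul_distrib, apply_ite conj, map_one, prod_ite, prod_const, one_pow,
    mul_one] at this
  rw [hphase] at this
  linear_combination this / 2

lemma tensorMoment_eq_ite (hν : IsUnitarilyInvariantSphereMeasure ν) {N : ℕ}
    (f g : Fin N → Fin d) : tensorMoment ν f g =
      ((if Sym.ofFn f = Sym.ofFn g then symMoment ν (Sym.ofFn f) else 0 : ℝ) : ℂ) := by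
  split_ifs with h
  · obtain ⟨σ, rfl⟩ := Sym.ofFn_eq_ofFn_iff.1 h.symm
    rw [tensorMoment_comp_perm_right, tensorMoment_self]
  · obtain ⟨x, hx⟩ : ∃ x, (Sym.ofFn f : Multiset (Fin d)).count x ≠
        (Sym.ofFn g : Multiset (Fin d)).count x := by
      by_contra! hcount
      exact h (Sym.ext (Multiset.ext.2 hcount))
    rw [Sym.count_ofFn, Sym.count_ofFn] at hx
    rw [Complex.ofReal_zero]
    exact hν.tensorMoment_eq_zero_of_card_ne hx

lemma integral_normSq_dotProduct_pow_of_sum_normSq_eq_one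
    (hν : IsUnitarilyInvariantSphereMeasure ν) [NeZero d] {u : Fin d → ℂ}
    (hu : ∑ j, Complex.normSq (u j) = 1) (N : ℕ) :
    ∫ φ, Complex.normSq (u ⬝ᵥ φ) ^ N ∂ν = ∫ φ, Complex.normSq (φ 0) ^ N ∂ν := by
  obtain ⟨V, hV, hrow⟩ := exists_mem_unitaryGroup_row_eq 0 hu
  have hF : Continuous fun φ : Fin d → ℂ => Complex.normSq (φ 0) ^ N :=
    (Complex.continuous_normSq.comp (continuous_apply 0)).pow N
  rw [← hrow, ← hν.integral_comp_mulVec hV hF.aestronglyMeasurable]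
  rfl

lemma integral_normSq_dotProduct_pow (hν : IsUnitarilyInvariantSphereMeasure ν) [NeZero d]
    (v : Fin d → ℂ) (N : ℕ) :
    ∫ φ, Complex.normSq (v ⬝ᵥ φ) ^ N ∂ν =
      (∑ j, Complex.normSq (v j)) ^ N * ∫ φ, Complex.normSq (φ 0) ^ N ∂ν := by
  set r := ∑ j, Complex.normSq (v j)
  have hr0 : 0 ≤ r := sum_nonneg fun j _ => Complex.normSq_nonneg (v j)
  obtain ⟨u, hu, hvu⟩ : ∃ u : Fin d → ℂ, ∑ j, Complex.normSq (u j) = 1 ∧ v = (√r : ℂ) • u := by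
    by_cases hr : r = 0
    · refine ⟨Pi.single 0 1, by simp [Pi.single_apply], funext fun j => ?_⟩
      have := (sum_eq_zero_iff_of_nonneg fun j _ => Complex.normSq_nonneg (v j)).1 hr j
        (mem_univ j)
      simp_all
    · have hsqrt : (√r : ℂ) ≠ 0 := by
        exact_mod_cast (Real.sqrt_pos.2 (lt_of_le_of_ne hr0 (Ne.symm hr))).ne'
      refine ⟨(√r : ℂ)⁻¹ • v, ?_, by rw [smul_smul, mul_inv_cancel₀ hsqrt, one_smul]⟩
      simp only [Pi.smul_apply, smul_eq_mul, Complex.normSq_mul, Complex.normSq_inv,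
        Complex.normSq_ofReal, ← mul_sum]
      exact (Real.mul_self_sqrt hr0).symm ▸ inv_mul_cancel₀ hr
  rw [← hν.integral_normSq_dotProduct_pow_of_sum_normSq_eq_one hu, ← integral_const_mul]
  congr with φ
  rw [hvu, smul_dotProduct, smul_eq_mul, Complex.normSq_mul, Complex.normSq_ofReal, mul_pow,
    Real.mul_self_sqrt hr0]

lemma sum_prod_mul_tensorMoment (hν : IsUnitarilyInvariantSphereMeasure ν) (v : Fin d → ℂ)
    (N : ℕ) :
    ∑ f : Fin N → Fin d, ∑ g : Fin N → Fin d,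
        (∏ i, v (f i) * conj (v (g i))) * tensorMoment ν f g =
      ∫ φ, Complex.normSq (v ⬝ᵥ φ) ^ N ∂ν := by
  have hexpand (φ : Fin d → ℂ) : (Complex.normSq (v ⬝ᵥ φ) ^ N : ℂ) =
      ∑ f : Fin N → Fin d, ∑ g : Fin N → Fin d,
        (∏ i, v (f i) * conj (v (g i))) * ∏ i, φ (f i) * conj (φ (g i)) := by
    rw [← Complex.mul_conj, mul_pow, dotProduct, map_sum, Fintype.sum_pow, Fintype.sum_pow,
      sum_mul_sum]
    refine sum_congr rfl fun f _ => sum_congr rfl fun g _ => ?_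
    simp only [map_mul, ← prod_mul_distrib]
    exact prod_congr rfl fun i _ => by ring
  simp only [tensorMoment, ← integral_const_mul, ← integral_complex_ofReal, Complex.ofReal_pow,
    hexpand]
  rw [integral_finsetSum _ fun f _ => integrable_finsetSum _ fun g _ =>
    (hν.integrable_prod_mul_conj f g).const_mul _]
  exact sum_congr rfl fun f _ => (integral_finsetSum _ fun g _ =>
    (hν.integrable_prod_mul_conj f g).const_mul _).symm

lemma sum_tensorMoment_self (hν : IsUnitarilyInvariantSphereMeasure ν) (N : ℕ) :
    ∑ f : Fin N → Fin d, tensorMoment ν f f = 1 := by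
  have := hν.isProbabilityMeasure
  simp only [tensorMoment]
  rw [← integral_finsetSum _ fun f _ => hν.integrable_prod_mul_conj f f]
  have hone : (fun φ : Fin d → ℂ => ∑ f : Fin N → Fin d, ∏ i, φ (f i) * conj (φ (f i)))
      =ᵐ[ν] fun _ => 1 := hν.ae_sum_normSq.mono fun φ hφ => by
    dsimp only
    rw [← Fintype.sum_pow (fun x => φ x * conj (φ x))]
    simp [Complex.mul_conj, ← Complex.ofReal_sum, hφ]
  simp [integral_congr_ae hone]

lemma symMoment_mul_card_fiber (hν : IsUnitarilyInvariantSphereMeasure ν) [NeZero d] {N : ℕ}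
    (s : Sym (Fin d) N) :
    symMoment ν s * #{f | Sym.ofFn f = s} = ∫ φ, Complex.normSq (φ 0) ^ N ∂ν := by
  refine Sym.mul_card_fiber_ofFn_eq_of_forall_sum_eq _ _ (fun q => ?_) s
  have h := hν.sum_prod_mul_tensorMoment (fun x => (q x : ℂ)) N
  rw [hν.integral_normSq_dotProduct_pow] at h
  simp only [hν.tensorMoment_eq_ite, Complex.conj_ofReal, Complex.normSq_ofReal, ← sq] at h
  exact_mod_cast h

lemma choose_mul_integral_normSq_pow (hν : IsUnitarilyInvariantSphereMeasure ν) [NeZero d]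
    (N : ℕ) : ((N + d - 1).choose N : ℝ) * ∫ φ, Complex.normSq (φ 0) ^ N ∂ν = 1 := by
  have htrace := hν.sum_tensorMoment_self N
  simp only [tensorMoment_self] at htrace
  rw [← sum_fiberwise univ Sym.ofFn] at htrace
  have hfiber (s : Sym (Fin d) N) : ∑ f with Sym.ofFn f = s, (symMoment ν (Sym.ofFn f) : ℂ) =
      ∫ φ, Complex.normSq (φ 0) ^ N ∂ν := by
    rw [sum_congr rfl fun f hf => by rw [(mem_filter.1 hf).2], sum_const, nsmul_eq_mul,
      mul_comm, ← hν.symMoment_mul_card_fiber s]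
    push_cast
    rfl
  simp only [hfiber, sum_const, card_univ, Sym.card_sym_eq_choose, Fintype.card_fin,
    nsmul_eq_mul] at htrace
  rw [add_comm N]
  exact_mod_cast htrace

theorem tensorMoment_eq_factorial_div_mul_sum_perm (hν : IsUnitarilyInvariantSphereMeasure ν)
    [NeZero d] {N : ℕ} (f g : Fin N → Fin d) :
    tensorMoment ν f g = ((d - 1).factorial : ℂ) / (N + d - 1).factorial *
      ∑ σ : Equiv.Perm (Fin N), (if f = g ∘ σ then 1 else 0) := by
  rw [sum_boole, hν.tensorMoment_eq_ite]
  split_ifs with h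
  · have hK := hν.symMoment_mul_card_fiber (Sym.ofFn f)
    have hKS : (#{k | Sym.ofFn k = Sym.ofFn f} : ℝ) * #{σ : Equiv.Perm (Fin N) | f = g ∘ σ} =
        N.factorial := by
      exact_mod_cast h ▸ Sym.card_fiber_ofFn_mul_card_perm h
    have hc := hν.choose_mul_integral_normSq_pow N
    have hfac : ((N + d - 1).choose N : ℝ) * N.factorial * (d - 1).factorial =
        (N + d - 1).factorial := by
      have := Nat.choose_mul_factorial_mul_factorial (Nat.le_add_right N (d - 1))
      rw [Nat.add_sub_cancel_left, ← Nat.add_sub_assoc NeZero.one_le] at this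
      exact_mod_cast this
    set S : ℝ := ↑(#{σ : Equiv.Perm (Fin N) | f = g ∘ ⇑σ})
    set C : ℝ := ↑((N + d - 1).choose N)
    set m := symMoment ν (Sym.ofFn f)
    have hR : m = ((d - 1).factorial : ℝ) / (N + d - 1).factorial * S := by
      rw [div_mul_eq_mul_div, eq_div_iff (by positivity), ← hfac]
      linear_combination (-m * C * (d - 1).factorial) * hKS +
        ((d - 1).factorial * S * C) * hK + ((d - 1).factorial * S) * hc
    rw [hR]
    push_cast [S]
    rfl
  · rw [filter_false_of_mem fun (σ : Equiv.Perm (Fin N)) _ (hσ : f = g ∘ σ) =>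
      h (hσ ▸ Sym.ofFn_comp_perm g σ)]
    simp

end IsUnitarilyInvariantSphereMeasure

theorem haar_pure_state_Nth_moment_general {d N : ℕ} (hd : 0 < d)
    (μU : Measure (Fin d → Fin d → ℂ)) (hμU : IsHaarUnitary μU)
    (f g : Fin N → Fin d) :
    ∫ φ, ∏ i, φ (f i) * (starRingEnd ℂ) (φ (g i)) ∂(pureStateMeasure hd μU)
      = ((Nat.factorial (d - 1) : ℂ) / (Nat.factorial (N + d - 1))) *
          ∑ σ : Equiv.Perm (Fin N), (if f = g ∘ σ then 1 else 0) := by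
  have : NeZero d := ⟨hd.ne'⟩
  exact (isUnitarilyInvariantSphereMeasure_pureStateMeasure hd hμU)
    |>.tensorMoment_eq_factorial_div_mul_sum_perm f g

/-- The `N`-th moment of the Haar pure-state measure is the normalized
symmetrizer: entrywise, for functions `f g : Fin N → Fin d`,
`∫ ∏ i, φ (f i) conj (φ (g i)) dμ_d(φ)
  = ((d − 1)! / (N + d − 1)!) · ∑_{σ ∈ S_N} (P_σ)_{f, g}`,
where `(P_σ)_{f, g} = 1` if `f = g ∘ σ` and `0` otherwise. -/
theorem haar_pure_state_Nth_moment {d N : ℕ} (hd : 0 < d) (hN : 0 < N)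
    (μU : Measure (Fin d → Fin d → ℂ)) (hμU : IsHaarUnitary μU)
    (f g : Fin N → Fin d) :
    ∫ φ, ∏ i, φ (f i) * (starRingEnd ℂ) (φ (g i)) ∂(pureStateMeasure hd μU)
      = ((Nat.factorial (d - 1) : ℂ) / (Nat.factorial (N + d - 1))) *
          ∑ σ : Equiv.Perm (Fin N), (if f = g ∘ σ then 1 else 0) :=
  haar_pure_state_Nth_moment_general hd μU hμU f g
end
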